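/- arXiv:2307.03052 — 3 statements merged into one kernel-verified Lean document; each statement's English description precedes it below -/
import Mathlib

section
/- Let X, Y be n×n real matrices with Y symmetric and X symmetric positive definite. Denote by λ_min and λ_max the smallest and largest eigenvalues of X. Then tr((XY)^2) ≥ (λ_min/λ_max)^2 · ‖XY‖^2, where ‖·‖ is the Frobenius norm. -/
/-!
Diagonalise `X = U D Uᵀ` with `U` orthogonal and put `B = Uᵀ Y U`, again symmetric. Both sides
are invariant under conjugation by `U`, so `XY` may be replaced by `DB`, and then
`tr((DB)²) = ∑ dᵢ dⱼ Bᵢⱼ²` while `‖DB‖² = ∑ dᵢ² Bᵢⱼ²`. Termwise,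
`(λ_min/λ_max)² dᵢ² ≤ λ_min² ≤ dᵢ dⱼ`.
-/

open Matrix

namespace Matrix

theorem sum_sq_eq_trace_mul_conjTranspose {m n : Type*} [Fintype m] [Fintype n]
    (M : Matrix m n ℝ) : ∑ i, ∑ j, M i j ^ 2 = trace (M * Mᴴ) := by
  simp [trace, mul_apply, sq]

variable {ι : Type*} [Fintype ι] [DecidableEq ι]

theorem trace_conjStarAlgAut {R : Type*} [CommSemiring R] [StarRing R]
    (U : unitary (Matrix ι ι R)) (M : Matrix ι ι R) :
    trace (Unitary.conjStarAlgAut R _ U M) = trace M := by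
  rw [Unitary.conjStarAlgAut_apply, trace_mul_cycle, Unitary.coe_star_mul_self, one_mul]

theorem sum_sq_conjStarAlgAut (U : unitary (Matrix ι ι ℝ)) (M : Matrix ι ι ℝ) :
    ∑ i, ∑ j, (Unitary.conjStarAlgAut ℝ _ U M) i j ^ 2 = ∑ i, ∑ j, M i j ^ 2 := by
  simp only [sum_sq_eq_trace_mul_conjTranspose, ← star_eq_conjTranspose]
  rw [← map_star, ← map_mul, trace_conjStarAlgAut]

theorem sum_sq_diagonal_mul (d : ι → ℝ) (B : Matrix ι ι ℝ) :
    ∑ i, ∑ j, (diagonal d * B) i j ^ 2 = ∑ i, ∑ j, d i ^ 2 * B i j ^ 2 := by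
  simp only [diagonal_mul, mul_pow]

theorem trace_sq_diagonal_mul (d : ι → ℝ) {B : Matrix ι ι ℝ} (hB : B.IsSymm) :
    trace ((diagonal d * B) ^ 2) = ∑ i, ∑ j, d i * d j * B i j ^ 2 := by
  have hdB : ∀ i j, (diagonal d * B) i j = d i * B i j := diagonal_mul d B
  simp only [sq, trace, diag_apply, mul_apply, hdB]
  refine Finset.sum_congr rfl fun i _ => Finset.sum_congr rfl fun j _ => ?_
  rw [hB.apply i j]
  ring

end Matrix

theorem sq_div_mul_sq_le_mul {a b x y : ℝ} (ha : 0 < a) (hax : a ≤ x) (hxb : x ≤ b)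
    (hay : a ≤ y) : (a / b) ^ 2 * x ^ 2 ≤ x * y :=
  calc (a / b) ^ 2 * x ^ 2 = a ^ 2 * (x / b) ^ 2 := by ring
    _ ≤ a ^ 2 * 1 := by
      gcongr
      have hb : 0 < b := by linarith
      exact pow_le_one₀ (div_nonneg (by linarith) hb.le) ((div_le_one hb).2 hxb)
    _ ≤ x * y := by nlinarith

theorem sq_div_mul_sum_sq_le_trace_sq {ι : Type*} [Fintype ι] [DecidableEq ι] {d : ι → ℝ}
    {B : Matrix ι ι ℝ} (hB : B.IsSymm) {a b : ℝ} (ha : 0 < a) (hlo : ∀ i, a ≤ d i)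
    (hhi : ∀ i, d i ≤ b) :
    (a / b) ^ 2 * ∑ i, ∑ j, (diagonal d * B) i j ^ 2 ≤ trace ((diagonal d * B) ^ 2) := by
  rw [sum_sq_diagonal_mul, trace_sq_diagonal_mul d hB, Finset.mul_sum]
  refine Finset.sum_le_sum fun i _ => ?_
  rw [Finset.mul_sum]
  refine Finset.sum_le_sum fun j _ => ?_
  rw [← mul_assoc]
  exact mul_le_mul_of_nonneg_right (sq_div_mul_sq_le_mul ha (hlo i) (hhi i) (hlo j)) (sq_nonneg _)

theorem Matrix.IsHermitian.real_spectral_theorem {ι : Type*} [Fintype ι] [DecidableEq ι]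
    {X : Matrix ι ι ℝ} (hX : X.IsHermitian) :
    X = Unitary.conjStarAlgAut ℝ _ hX.eigenvectorUnitary (diagonal hX.eigenvalues) := by
  simpa [RCLike.ofReal_real_eq_id] using hX.spectral_theorem

/-- For n×n real matrices with `Y` symmetric and `X` symmetric positive definite,
`tr((XY)^2) ≥ (λ_min/λ_max)^2 ‖XY‖²` (Frobenius norm). -/
theorem stmt0 {n : ℕ} (X Y : Matrix (Fin n) (Fin n) ℝ)
    (hY : Y.IsSymm) (hX : X.PosDef)
    (lmin lmax : ℝ)
    (hmin : IsLeast (Set.range hX.1.eigenvalues) lmin)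
    (hmax : IsGreatest (Set.range hX.1.eigenvalues) lmax) :
    (lmin / lmax) ^ 2 * ∑ i, ∑ j, ((X * Y) i j) ^ 2 ≤ Matrix.trace ((X * Y) ^ 2) := by
  set Φ := Unitary.conjStarAlgAut ℝ _ hX.1.eigenvectorUnitary
  set B := Φ.symm Y
  have hXY : X * Y = Φ (diagonal hX.1.eigenvalues * B) := by
    rw [map_mul, Φ.apply_symm_apply, ← hX.1.real_spectral_theorem]
  have hB : B.IsSymm := by
    rw [IsSymm, ← conjTranspose_eq_transpose_of_trivial, ← star_eq_conjTranspose, ← map_star,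
      star_eq_conjTranspose, conjTranspose_eq_transpose_of_trivial, hY.eq]
  obtain ⟨⟨i, rfl⟩, hlo⟩ := hmin
  rw [hXY, sum_sq_conjStarAlgAut, ← map_pow, trace_conjStarAlgAut]
  exact sq_div_mul_sum_sq_le_trace_sq hB (hX.eigenvalues_pos i) (fun j => hlo ⟨j, rfl⟩)
    (fun j => hmax.2 ⟨j, rfl⟩)
end

section
/- Let H be a norm on ℝⁿ of class C²(ℝⁿ∖{0}) satisfying λ|η|² ≤ (1/2)∇²(H²)(ξ)η·η ≤ Λ|η|² for all ξ ≠ 0, η ∈ ℝⁿ, with 0 < λ ≤ Λ. Then for every ξ ∈ 𝕊^{n-1} and every unit vector η orthogonal to ξ, one has (λ/√Λ)|η|² ≤ ∇²H(ξ)η·η ≤ (Λ/√λ)(1 + Λ/λ)|η|². -/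
/-!
Differentiating the homogeneity of `H` gives Euler's identity `∇H(ξ)·ξ = H(ξ)` and `∇²H(ξ)ξ = 0`,
so `(1/2)∇²(H²)(ξ)η·η = (∇H(ξ)·η)² + H(ξ)∇²H(ξ)η·η`; at `η = ξ` ellipticity gives
`λ ≤ H² ≤ Λ` on the unit sphere. For a unit `η ⟂ ξ` write `η = αξ + ζ` with `∇H(ξ)·ζ = 0`. Then
`∇²H(ξ)η·η = ∇²H(ξ)ζ·ζ = (1/2)∇²(H²)(ξ)ζ·ζ / H(ξ)`, which ellipticity traps between
`λ|ζ|²/H(ξ)` and `Λ|ζ|²/H(ξ)`, where `|ζ|² = 1 + α²` and `α² = (∇H(ξ)·η)²/H(ξ)² ≤ Λ/λ`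
since subadditivity gives `|∇H(ξ)·η| ≤ H(η)`.
-/

open scoped RealInnerProductSpace Topology
open Filter

section

variable {E : Type*} [NormedAddCommGroup E] [NormedSpace ℝ E]

theorem HasFDerivAt.apply_self_eq_of_eventuallyEq {F : Type*} [NormedAddCommGroup F]
    [NormedSpace ℝ F] {G : E → F} {G' : E →L[ℝ] F} {x : E}
    (hG : HasFDerivAt G G' x) {g : ℝ → F} {v : F} (hg : HasDerivAt g v 1)
    (h : (fun c : ℝ => G (c • x)) =ᶠ[𝓝 1] g) : G' x = v := by
  have hline : HasDerivAt (fun c : ℝ => c • x) x 1 := by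
    simpa using (hasDerivAt_id (1 : ℝ)).smul_const x
  rw [← one_smul ℝ x] at hG
  exact (hG.comp_hasDerivAt 1 hline).unique (hg.congr_of_eventuallyEq h)

variable {H : E → ℝ} {x : E}

theorem fderiv_apply_self_of_pos_homogeneous (hhom : ∀ c : ℝ, 0 < c → ∀ x, H (c • x) = c * H x)
    (hx : DifferentiableAt ℝ H x) : fderiv ℝ H x x = H x := by
  refine hx.hasFDerivAt.apply_self_eq_of_eventuallyEq (hasDerivAt_mul_const (H x)) ?_
  filter_upwards [eventually_gt_nhds one_pos] with c hc using hhom c hc x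

theorem fderiv_smul_of_pos_homogeneous (hhom : ∀ c : ℝ, 0 < c → ∀ x, H (c • x) = c * H x)
    {c : ℝ} (hc : 0 < c) (hx : DifferentiableAt ℝ H x) (hcx : DifferentiableAt ℝ H (c • x)) :
    fderiv ℝ H (c • x) = fderiv ℝ H x := by
  have h₁ : HasFDerivAt (fun y => H (c • y)) ((fderiv ℝ H (c • x)).comp (c • .id ℝ E)) x :=
    hcx.hasFDerivAt.comp x ((hasFDerivAt_id x).const_smul c)
  have h₂ : HasFDerivAt (fun y => H (c • y)) (c • fderiv ℝ H x) x := by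
    simp_rw [hhom c hc]
    exact hx.hasFDerivAt.const_mul c
  refine smul_right_injective _ hc.ne' (Eq.trans ?_ (h₁.unique h₂))
  ext v
  simp

theorem fderiv_fderiv_apply_self_of_pos_homogeneous
    (hhom : ∀ c : ℝ, 0 < c → ∀ x, H (c • x) = c * H x) (hx : ContDiffAt ℝ 2 H x) :
    fderiv ℝ (fderiv ℝ H) x x = 0 := by
  have hdiff : ∀ᶠ y in 𝓝 x, DifferentiableAt ℝ H y :=
    (hx.eventually (by simp)).mono fun y hy => hy.differentiableAt (by simp)
  have hline : Tendsto (fun c : ℝ => c • x) (𝓝 1) (𝓝 x) :=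
    (continuous_id.smul continuous_const).tendsto' (1 : ℝ) x (one_smul ℝ x)
  refine ((hx.fderiv_right (m := 1) le_rfl).differentiableAt one_ne_zero).hasFDerivAt
    |>.apply_self_eq_of_eventuallyEq (hasDerivAt_const 1 (fderiv ℝ H x)) ?_
  filter_upwards [eventually_gt_nhds one_pos, hline.eventually hdiff] with c hc hcx
  exact fderiv_smul_of_pos_homogeneous hhom hc (hx.differentiableAt (by simp)) hcx

theorem fderiv_fderiv_sq_apply (hx : ContDiffAt ℝ 2 H x) (v : E) :
    fderiv ℝ (fderiv ℝ fun y => H y ^ 2) x v v =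
      2 * (fderiv ℝ H x v ^ 2 + H x * fderiv ℝ (fderiv ℝ H) x v v) := by
  have hfd : fderiv ℝ (fun y => H y ^ 2) =ᶠ[𝓝 x] fun y => (2 * H y) • fderiv ℝ H y := by
    filter_upwards [hx.eventually (by simp)] with y hy
    simpa using ((hy.differentiableAt (by simp)).hasFDerivAt.pow 2).fderiv
  have hd : HasFDerivAt (fun y => (2 * H y) • fderiv ℝ H y)
      ((2 * H x) • fderiv ℝ (fderiv ℝ H) x + ((2 : ℝ) • fderiv ℝ H x).smulRight (fderiv ℝ H x))
      x :=
    ((hx.differentiableAt (by simp)).hasFDerivAt.const_mul 2).smul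
      ((hx.fderiv_right (m := 1) le_rfl).differentiableAt one_ne_zero).hasFDerivAt
  rw [hfd.fderiv_eq, hd.fderiv]
  simp only [add_apply, smul_apply, ContinuousLinearMap.smulRight_apply, smul_eq_mul]
  ring

theorem half_iteratedFDeriv_two_sq_apply (hx : ContDiffAt ℝ 2 H x) (v : E) :
    1 / 2 * iteratedFDeriv ℝ 2 (fun y => H y ^ 2) x ![v, v] =
      fderiv ℝ H x v ^ 2 + H x * iteratedFDeriv ℝ 2 H x ![v, v] := by
  simp only [iteratedFDeriv_two_apply, Matrix.cons_val_zero, Matrix.cons_val_one,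
    fderiv_fderiv_sq_apply hx]
  ring

theorem half_iteratedFDeriv_two_sq_apply_self
    (hhom : ∀ c : ℝ, 0 < c → ∀ x, H (c • x) = c * H x) (hx : ContDiffAt ℝ 2 H x) :
    1 / 2 * iteratedFDeriv ℝ 2 (fun y => H y ^ 2) x ![x, x] = H x ^ 2 := by
  rw [half_iteratedFDeriv_two_sq_apply hx, fderiv_apply_self_of_pos_homogeneous hhom
    (hx.differentiableAt (by simp)), iteratedFDeriv_two_apply]
  simp [fderiv_fderiv_apply_self_of_pos_homogeneous hhom hx]

theorem fderiv_apply_sub_div_smul_self (hhom : ∀ c : ℝ, 0 < c → ∀ x, H (c • x) = c * H x)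
    (hx : DifferentiableAt ℝ H x) (hHx : H x ≠ 0) (v : E) :
    fderiv ℝ H x (v - (fderiv ℝ H x v / H x) • x) = 0 := by
  rw [map_sub, map_smul, fderiv_apply_self_of_pos_homogeneous hhom hx, smul_eq_mul,
    div_mul_cancel₀ _ hHx, sub_self]

theorem fderiv_apply_le_of_subadditive (hsub : ∀ x y, H (x + y) ≤ H x + H y)
    (hhom : ∀ c : ℝ, 0 < c → ∀ x, H (c • x) = c * H x) {H' : E →L[ℝ] ℝ}
    (hx : HasFDerivAt H H' x) (v : E) : H' v ≤ H v := by
  have hline : HasDerivAt (fun t : ℝ => x + t • v) v 0 := by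
    simpa using ((hasDerivAt_id (0 : ℝ)).smul_const v).const_add x
  have hx₀ : HasFDerivAt H H' (x + (0 : ℝ) • v) := by simpa using hx
  refine le_of_tendsto ((hx₀.comp_hasDerivAt 0 hline).tendsto_slope_zero_right) ?_
  filter_upwards [self_mem_nhdsWithin] with t (ht : 0 < t)
  have := hsub x (t • v)
  rw [hhom t ht] at this
  simp only [Function.comp_apply, zero_add, zero_smul, add_zero, smul_eq_mul]
  rw [inv_mul_le_iff₀ ht]
  linarith

theorem abs_fderiv_apply_le_of_subadditive (hsub : ∀ x y, H (x + y) ≤ H x + H y)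
    (hhom : ∀ (c : ℝ) x, H (c • x) = |c| * H x) {H' : E →L[ℝ] ℝ}
    (hx : HasFDerivAt H H' x) (v : E) : |H' v| ≤ H v := by
  have hpos : ∀ c : ℝ, 0 < c → ∀ x, H (c • x) = c * H x := fun c hc x => by
    rw [hhom, abs_of_pos hc]
  have hneg : H (-v) = H v := by simpa using hhom (-1) v
  refine abs_le.2 ⟨?_, fderiv_apply_le_of_subadditive hsub hpos hx v⟩
  simpa [hneg, neg_le] using fderiv_apply_le_of_subadditive hsub hpos hx (-v)

theorem IsSymmSndFDerivAt.iteratedFDeriv_two_apply_sub_smul (hs : IsSymmSndFDerivAt ℝ H x)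
    (hx : fderiv ℝ (fderiv ℝ H) x x = 0) (a : ℝ) (v : E) :
    iteratedFDeriv ℝ 2 H x ![v - a • x, v - a • x] = iteratedFDeriv ℝ 2 H x ![v, v] := by
  simp [iteratedFDeriv_two_apply, hx, ← hs x v]

end

theorem norm_sub_smul_sq_of_inner_eq_zero {E : Type*} [NormedAddCommGroup E]
    [InnerProductSpace ℝ E] {x v : E} (h : ⟪x, v⟫ = 0) (a : ℝ) :
    ‖v - a • x‖ ^ 2 = ‖v‖ ^ 2 + a ^ 2 * ‖x‖ ^ 2 := by
  have horth : ⟪v, a • x⟫ = 0 := by simp [inner_smul_right, real_inner_comm, h]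
  rw [sq, norm_sub_sq_eq_norm_sq_add_norm_sq_real horth, norm_smul, Real.norm_eq_abs,
    ← sq_abs a]
  ring

theorem div_sqrt_le_and_le_of_mul_bounds {lam Lam h d T : ℝ} (hlam : 0 < lam) (hh : 0 ≤ h)
    (hh2 : lam ≤ h ^ 2 ∧ h ^ 2 ≤ Lam) (hd : d ^ 2 ≤ Lam)
    (hT : lam * (1 + (d / h) ^ 2) ≤ h * T ∧ h * T ≤ Lam * (1 + (d / h) ^ 2)) :
    lam / √Lam ≤ T ∧ T ≤ Lam / √lam * (1 + Lam / lam) := by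
  have hlam_le : √lam ≤ h := (Real.sqrt_le_sqrt hh2.1).trans_eq (Real.sqrt_sq hh)
  have hle_Lam : h ≤ √Lam := (Real.sqrt_sq hh).symm.trans_le (Real.sqrt_le_sqrt hh2.2)
  have hlam_sqrt : 0 < √lam := Real.sqrt_pos.2 hlam
  have hhT : lam ≤ h * T := le_trans (by nlinarith [sq_nonneg (d / h)]) hT.1
  have hT0 : 0 < T := pos_of_mul_pos_right (hlam.trans_le hhT) hh
  have hdh : (d / h) ^ 2 ≤ Lam / lam := by
    rw [div_pow]
    exact div_le_div₀ (hh2.1.trans hh2.2 |>.trans' hlam.le) hd hlam hh2.1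
  constructor
  · rw [div_le_iff₀ (hlam_sqrt.trans_le hlam_le |>.trans_le hle_Lam)]
    nlinarith
  · rw [div_mul_eq_mul_div, le_div_iff₀ hlam_sqrt]
    calc T * √lam ≤ h * T := by nlinarith
      _ ≤ Lam * (1 + (d / h) ^ 2) := hT.2
      _ ≤ Lam * (1 + Lam / lam) := by gcongr; linarith

theorem stmt7_general {n : ℕ} (H : EuclideanSpace ℝ (Fin n) → ℝ)
    (hpos : ∀ x, 0 ≤ H x)
    (htri : ∀ x y, H (x + y) ≤ H x + H y)
    (hhom : ∀ (c : ℝ) (x : EuclideanSpace ℝ (Fin n)), H (c • x) = |c| * H x)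
    (hC2 : ContDiffOn ℝ 2 H {(0 : EuclideanSpace ℝ (Fin n))}ᶜ)
    (lam Lam : ℝ) (hlam : 0 < lam)
    (hell : ∀ ξ : EuclideanSpace ℝ (Fin n), ξ ≠ 0 → ∀ η : EuclideanSpace ℝ (Fin n),
      lam * ‖η‖ ^ 2 ≤ (1 / 2) * iteratedFDeriv ℝ 2 (fun x => (H x) ^ 2) ξ ![η, η] ∧
      (1 / 2) * iteratedFDeriv ℝ 2 (fun x => (H x) ^ 2) ξ ![η, η] ≤ Lam * ‖η‖ ^ 2) :
    ∀ ξ : EuclideanSpace ℝ (Fin n), ‖ξ‖ = 1 →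
      ∀ η : EuclideanSpace ℝ (Fin n), ‖η‖ = 1 → ⟪ξ, η⟫ = 0 →
        lam / Real.sqrt Lam * ‖η‖ ^ 2 ≤ iteratedFDeriv ℝ 2 H ξ ![η, η] ∧
        iteratedFDeriv ℝ 2 H ξ ![η, η] ≤ Lam / Real.sqrt lam * (1 + Lam / lam) * ‖η‖ ^ 2 := by
  intro ξ hξ η hη hperp
  have hhom_pos : ∀ c : ℝ, 0 < c → ∀ x, H (c • x) = c * H x := fun c hc x => by
    rw [hhom, abs_of_pos hc]
  have hC2at : ∀ x, x ≠ 0 → ContDiffAt ℝ 2 H x := fun x hx =>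
    hC2.contDiffAt (isOpen_compl_singleton.mem_nhds hx)
  have hsq : ∀ x, ‖x‖ = 1 → lam ≤ H x ^ 2 ∧ H x ^ 2 ≤ Lam := fun x hx => by
    have hx0 : x ≠ 0 := ne_zero_of_norm_ne_zero (hx ▸ one_ne_zero)
    have := hell x hx0 x
    rwa [half_iteratedFDeriv_two_sq_apply_self hhom_pos (hC2at x hx0), hx, one_pow, mul_one,
      mul_one] at this
  have hξ0 : ξ ≠ 0 := ne_zero_of_norm_ne_zero (hξ ▸ one_ne_zero)
  have hHξ := hC2at ξ hξ0
  have hDη : fderiv ℝ H ξ η ^ 2 ≤ Lam := by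
    refine (sq_le_sq.2 ?_).trans (hsq η hη).2
    rw [abs_of_nonneg (hpos η)]
    exact abs_fderiv_apply_le_of_subadditive htri hhom
      (hHξ.differentiableAt (by simp)).hasFDerivAt η
  set a := fderiv ℝ H ξ η / H ξ
  have htan : fderiv ℝ H ξ (η - a • ξ) = 0 := fderiv_apply_sub_div_smul_self hhom_pos
    (hHξ.differentiableAt (by simp)) (by nlinarith [hsq ξ hξ]) η
  have hnorm : ‖η - a • ξ‖ ^ 2 = 1 + a ^ 2 := by
    rw [norm_sub_smul_sq_of_inner_eq_zero hperp, hη, hξ]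
    ring
  have hellζ := hell ξ hξ0 (η - a • ξ)
  rw [half_iteratedFDeriv_two_sq_apply hHξ, htan, hnorm,
    (hHξ.isSymmSndFDerivAt (by simp)).iteratedFDeriv_two_apply_sub_smul
      (fderiv_fderiv_apply_self_of_pos_homogeneous hhom_pos hHξ)] at hellζ
  simpa [hη] using
    div_sqrt_le_and_le_of_mul_bounds hlam (hpos ξ) (hsq ξ hξ) hDη (by simpa using hellζ)

/-- For a uniformly elliptic `C²` norm `H`, on the unit sphere and for unit vectors `η ⟂ ξ`:
`(λ/√Λ)|η|² ≤ ∇²H(ξ)η·η ≤ (Λ/√λ)(1 + Λ/λ)|η|²`. -/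
theorem stmt7 {n : ℕ} (H : EuclideanSpace ℝ (Fin n) → ℝ)
    (hpos : ∀ x, 0 ≤ H x)
    (hzero : ∀ x, H x = 0 ↔ x = 0)
    (htri : ∀ x y, H (x + y) ≤ H x + H y)
    (hhom : ∀ (c : ℝ) (x : EuclideanSpace ℝ (Fin n)), H (c • x) = |c| * H x)
    (hC2 : ContDiffOn ℝ 2 H {(0 : EuclideanSpace ℝ (Fin n))}ᶜ)
    (lam Lam : ℝ) (hlam : 0 < lam) (hlL : lam ≤ Lam)
    (hell : ∀ ξ : EuclideanSpace ℝ (Fin n), ξ ≠ 0 → ∀ η : EuclideanSpace ℝ (Fin n),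
      lam * ‖η‖ ^ 2 ≤ (1 / 2) * iteratedFDeriv ℝ 2 (fun x => (H x) ^ 2) ξ ![η, η] ∧
      (1 / 2) * iteratedFDeriv ℝ 2 (fun x => (H x) ^ 2) ξ ![η, η] ≤ Lam * ‖η‖ ^ 2) :
    ∀ ξ : EuclideanSpace ℝ (Fin n), ‖ξ‖ = 1 →
      ∀ η : EuclideanSpace ℝ (Fin n), ‖η‖ = 1 → ⟪ξ, η⟫ = 0 →
        lam / Real.sqrt Lam * ‖η‖ ^ 2 ≤ iteratedFDeriv ℝ 2 H ξ ![η, η] ∧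
        iteratedFDeriv ℝ 2 H ξ ![η, η] ≤ Lam / Real.sqrt lam * (1 + Lam / lam) * ‖η‖ ^ 2 :=
  stmt7_general H hpos htri hhom hC2 lam Lam hlam hell
end

section
/- Under the assumptions of the previous context, the map 𝒜(ξ) = a(H(ξ))·(1/2)∇(H²)(ξ) (extended by 𝒜(0)=0) is strictly monotone: (𝒜(ξ) − 𝒜(η))·(ξ − η) > 0 for all ξ, η ∈ ℝⁿ with ξ ≠ η. -/
/-!
Off the origin, `⟪𝒜 x, v⟫ = a(H x) · H x · DH(x) v`, whose derivative in the direction `v` is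
`a'(H) H (DH v)² + a(H) · ½ D²(H²)[v, v]`. A seminorm is convex, so
`½ D²(H²)[v, v] = (DH v)² + H · D²H[v, v] ≥ (DH v)²`; together with `t a'(t) ≥ i_a a(t)` and
`i_a > -1` this makes the derivative at least `min(1, 1 + i_a) · a(H) · ½ D²(H²)[v, v] > 0`.
Integrating along `[η, ξ]` proves the claim when the segment avoids `0`. Otherwise `ξ` and `η` are
opposite multiples of `ξ - η`, and the claim follows from `⟪𝒜 x, x⟫ = a(H x) H(x)² > 0`, which is
Euler's identity `DH(x) x = H x`.
-/

open scoped RealInnerProductSpace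
open Set Filter Topology

theorem mul_add_mul_pos_of_neg_one_lt {A D G Q i : ℝ} (hA : 0 < A) (hQ : 0 < Q) (hG : 0 ≤ G)
    (hGQ : G ≤ Q) (hi : -1 < i) (hD : i * A ≤ D) : 0 < D * G + A * Q := by
  have hDG : i * A * G ≤ D * G := mul_le_mul_of_nonneg_right hD hG
  rcases le_or_gt 0 i with hi0 | hi0
  · nlinarith [mul_nonneg (mul_nonneg hi0 hA.le) hG]
  · nlinarith [mul_le_mul_of_nonpos_left hGQ (mul_neg_of_neg_of_pos hi0 hA).le,
      mul_pos (mul_pos (by linarith : 0 < 1 + i) hA) hQ]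

section Calculus

variable {E F : Type*} [NormedAddCommGroup E] [NormedSpace ℝ E]
  [NormedAddCommGroup F] [NormedSpace ℝ F]

theorem ContDiffAt.hasLineDerivAt_fderiv_apply {f : E → F} {x : E} (hf : ContDiffAt ℝ 2 f x)
    (v w : E) :
    HasLineDerivAt ℝ (fun y => fderiv ℝ f y w) (iteratedFDeriv ℝ 2 f x ![v, w]) x v := by
  have hd : DifferentiableAt ℝ (fderiv ℝ f) x :=
    (hf.fderiv_right (m := 1) (by norm_num)).differentiableAt one_ne_zero
  rw [iteratedFDeriv_two_apply]
  exact ((ContinuousLinearMap.apply ℝ F w).hasFDerivAt.comp x hd.hasFDerivAt).hasLineDerivAt v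

theorem HasFDerivAt.apply_self_of_homogeneous {f : E → ℝ} {f' : E →L[ℝ] ℝ} {x : E} {k : ℕ}
    (hf : HasFDerivAt f f' x) (hhom : ∀ t > 0, f (t • x) = t ^ k * f x) : f' x = k * f x := by
  have hray : HasDerivAt (fun t : ℝ => f (t • x)) (f' x) 1 := by
    have hf1 : HasFDerivAt f f' ((1 : ℝ) • x) := by rwa [one_smul]
    have := hf1.comp_hasDerivAt 1 ((hasDerivAt_id (1 : ℝ)).smul_const x)
    rwa [one_smul] at this
  have hpow : HasDerivAt (fun t : ℝ => t ^ k * f x) (k * f x) 1 := by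
    simpa using (hasDerivAt_pow k (1 : ℝ)).mul_const (f x)
  refine hray.unique (hpow.congr_of_eventuallyEq ?_)
  filter_upwards [Ioi_mem_nhds one_pos] with t ht using hhom t ht

theorem fderiv_sq_apply {f : E → ℝ} {x : E} (hf : DifferentiableAt ℝ f x) (v : E) :
    fderiv ℝ (fun y => f y ^ 2) x v = 2 * f x * fderiv ℝ f x v := by
  rw [(hf.hasFDerivAt.pow 2).fderiv]
  simp

theorem iteratedFDeriv_two_sq_apply {f : E → ℝ} {x : E} (hf : ContDiffAt ℝ 2 f x) (v : E) :
    iteratedFDeriv ℝ 2 (fun y => f y ^ 2) x ![v, v] =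
      2 * (fderiv ℝ f x v ^ 2 + f x * iteratedFDeriv ℝ 2 f x ![v, v]) := by
  have hfd : ∀ᶠ y in 𝓝 x, DifferentiableAt ℝ f y :=
    (hf.eventually (by simp)).mono fun y hy => hy.differentiableAt two_ne_zero
  have hsq : fderiv ℝ (fun y => f y ^ 2) =ᶠ[𝓝 x] fun y => (2 * f y) • fderiv ℝ f y := by
    filter_upwards [hfd] with y hy
    ext v
    simp [fderiv_sq_apply hy]
  have hd2 : DifferentiableAt ℝ (fderiv ℝ f) x :=
    (hf.fderiv_right (m := 1) (by norm_num)).differentiableAt one_ne_zero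
  have hprod : HasFDerivAt (fun y => (2 * f y) • fderiv ℝ f y) _ x :=
    ((hf.differentiableAt two_ne_zero).hasFDerivAt.const_mul 2).smul hd2.hasFDerivAt
  rw [iteratedFDeriv_two_apply, iteratedFDeriv_two_apply, hsq.fderiv_eq, hprod.fderiv]
  simp only [Matrix.cons_val_zero, Matrix.cons_val_one, add_apply,
    smul_apply, ContinuousLinearMap.smulRight_apply, smul_eq_mul]
  ring

theorem ConvexOn.iteratedFDeriv_two_nonneg {f : E → ℝ} (hconv : ConvexOn ℝ univ f) {x : E}
    (hf : ContDiffAt ℝ 2 f x) (v : E) : 0 ≤ iteratedFDeriv ℝ 2 f x ![v, v] := by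
  have hline : ConvexOn ℝ univ (fun s : ℝ => f (x + s • v)) := by
    refine ⟨convex_univ, fun s _ t _ a b ha hb hab => ?_⟩
    have hcomb : x + (a • s + b • t) • v = a • (x + s • v) + b • (x + t • v) := by
      linear_combination (norm := module) (-hab) • x
    dsimp only
    rw [hcomb]
    exact hconv.2 (mem_univ _) (mem_univ _) ha hb hab
  have hnear : ∀ᶠ s in 𝓝 (0 : ℝ), DifferentiableAt ℝ f (x + s • v) := by
    have hcont : Tendsto (fun s : ℝ => x + s • v) (𝓝 0) (𝓝 x) :=
      (by fun_prop : Continuous fun s : ℝ => x + s • v).tendsto' 0 x (by simp)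
    exact hcont.eventually
      ((hf.eventually (by simp)).mono fun y hy => hy.differentiableAt two_ne_zero)
  obtain ⟨ε, hε, hball⟩ := Metric.eventually_nhds_iff_ball.1 hnear
  have hmono : MonotoneOn (fun s : ℝ => fderiv ℝ f (x + s • v) v) (Metric.ball 0 ε) :=
    ((hline.subset (subset_univ _) (convex_ball 0 ε)).monotoneOn_deriv fun s hs =>
      (hball s hs).comp s (by fun_prop)).congr fun s hs => (hball s hs).deriv_comp_add_smul
  have hacc : AccPt (0 : ℝ) (𝓟 (Metric.ball 0 ε)) := by
    simpa using (PerfectSpace.univ_preperfect (0 : ℝ) (mem_univ _)).nhds_inter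
      (Metric.ball_mem_nhds 0 hε)
  have hderiv : HasDerivAt (fun s : ℝ => fderiv ℝ f (x + s • v) v)
      (iteratedFDeriv ℝ 2 f x ![v, v]) 0 := hf.hasLineDerivAt_fderiv_apply v v
  exact hderiv.hasDerivWithinAt.nonneg_of_monotoneOn hacc hmono

theorem hasLineDerivAt_mul_mul_fderiv {H : E → ℝ} {a : ℝ → ℝ} {x : E} (hH : ContDiffAt ℝ 2 H x)
    (ha : DifferentiableAt ℝ a (H x)) (v : E) :
    HasLineDerivAt ℝ (fun y => a (H y) * (H y * fderiv ℝ H y v))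
      (deriv a (H x) * H x * fderiv ℝ H x v ^ 2 +
        a (H x) * ((1 / 2) * iteratedFDeriv ℝ 2 (fun y => H y ^ 2) x ![v, v])) x v := by
  have hh : HasDerivAt (fun s : ℝ => H (x + s • v)) (fderiv ℝ H x v) 0 :=
    (hH.differentiableAt two_ne_zero).hasFDerivAt.hasLineDerivAt v
  have hg : HasDerivAt (fun s : ℝ => fderiv ℝ H (x + s • v) v) (iteratedFDeriv ℝ 2 H x ![v, v]) 0 :=
    hH.hasLineDerivAt_fderiv_apply v v
  have ha' : HasDerivAt a (deriv a (H x)) (H (x + (0 : ℝ) • v)) := by simpa using ha.hasDerivAt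
  have hprod := (ha'.comp 0 hh).mul (hh.mul hg)
  unfold HasLineDerivAt
  rw [iteratedFDeriv_two_sq_apply hH]
  refine hprod.congr_deriv ?_
  simp only [Function.comp_apply, Pi.mul_apply, zero_smul, add_zero]
  ring

theorem ConvexOn.deriv_mul_sq_add_pos {H : E → ℝ} {a : ℝ → ℝ} {x : E} {ia : ℝ}
    (hconv : ConvexOn ℝ univ H) (hH : ContDiffAt ℝ 2 H x) (hHx : 0 < H x) (v : E)
    (hQ : 0 < iteratedFDeriv ℝ 2 (fun y => H y ^ 2) x ![v, v]) (ha : 0 < a (H x))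
    (hia : -1 < ia) (hlow : ia ≤ H x * deriv a (H x) / a (H x)) :
    0 < deriv a (H x) * H x * fderiv ℝ H x v ^ 2 +
      a (H x) * ((1 / 2) * iteratedFDeriv ℝ 2 (fun y => H y ^ 2) x ![v, v]) := by
  have hR := mul_nonneg hHx.le (hconv.iteratedFDeriv_two_nonneg hH v)
  rw [iteratedFDeriv_two_sq_apply hH] at hQ ⊢
  rw [mul_comm (deriv a (H x))]
  exact mul_add_mul_pos_of_neg_one_lt ha (by linarith) (sq_nonneg _) (by linarith) hia
    ((le_div_iff₀ ha).1 hlow)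

end Calculus

section InnerProduct

variable {E : Type*} [NormedAddCommGroup E] [InnerProductSpace ℝ E]

theorem inner_smul_half_gradient_sq [CompleteSpace E] {H : E → ℝ} {x : E}
    (hH : DifferentiableAt ℝ H x) (c : ℝ) (v : E) :
    ⟪c • ((1 / 2 : ℝ) • gradient (fun y => H y ^ 2) x), v⟫ = c * (H x * fderiv ℝ H x v) := by
  rw [real_inner_smul_left, real_inner_smul_left, inner_gradient_left, fderiv_sq_apply hH]
  ring

theorem inner_apply_smul_pos {A : E → E} (hA : ∀ x ≠ 0, 0 < ⟪A x, x⟫) {c : ℝ} (hc : 0 < c)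
    {u : E} (hu : u ≠ 0) : 0 < ⟪A (c • u), u⟫ := by
  have h := hA (c • u) (smul_ne_zero hc.ne' hu)
  rw [real_inner_smul_right] at h
  exact pos_of_mul_pos_right h hc.le

theorem inner_apply_smul_nonneg {A : E → E} (hA0 : A 0 = 0) (hA : ∀ x ≠ 0, 0 < ⟪A x, x⟫)
    {c : ℝ} (hc : 0 ≤ c) (u : E) : 0 ≤ ⟪A (c • u), u⟫ := by
  rcases hc.eq_or_lt with rfl | hc
  · simp [hA0]
  rcases eq_or_ne u 0 with rfl | hu
  · simp
  exact (inner_apply_smul_pos hA hc hu).le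

theorem inner_sub_pos_of_zero_mem_segment {A : E → E} (hA0 : A 0 = 0)
    (hA : ∀ x ≠ 0, 0 < ⟪A x, x⟫) {ξ η : E} (hne : ξ ≠ η) (h0 : (0 : E) ∈ segment ℝ η ξ) :
    0 < ⟪A ξ - A η, ξ - η⟫ := by
  obtain ⟨a, b, ha, hb, hab, hzero⟩ := h0
  have hξ : ξ = a • (ξ - η) := by linear_combination (norm := module) hzero - hab • ξ
  have hη : η = b • (η - ξ) := by linear_combination (norm := module) hzero - hab • η
  have hsplit : ⟪A ξ - A η, ξ - η⟫ = ⟪A (a • (ξ - η)), ξ - η⟫ + ⟪A (b • (η - ξ)), η - ξ⟫ := by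
    rw [inner_sub_left, ← hξ, ← hη, ← neg_sub ξ η, inner_neg_right]
    ring
  have hw : ξ - η ≠ 0 := sub_ne_zero.2 hne
  rw [hsplit]
  rcases ha.eq_or_lt with rfl | ha
  · exact add_pos_of_nonneg_of_pos (inner_apply_smul_nonneg hA0 hA le_rfl _)
      (inner_apply_smul_pos hA (by linarith) (sub_ne_zero.2 hne.symm))
  · exact add_pos_of_pos_of_nonneg (inner_apply_smul_pos hA ha hw)
      (inner_apply_smul_nonneg hA0 hA hb _)

theorem inner_sub_pos_of_hasLineDerivAt_pos {A : E → E} {ξ η : E}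
    (h : ∀ x ∈ segment ℝ η ξ, ∃ D > 0, HasLineDerivAt ℝ (fun y => ⟪A y, ξ - η⟫) D x (ξ - η)) :
    0 < ⟪A ξ - A η, ξ - η⟫ := by
  set φ : ℝ → ℝ := fun t => ⟪A (η + t • (ξ - η)), ξ - η⟫
  have hφ : ∀ t ∈ Icc (0 : ℝ) 1, ∃ D > 0, HasDerivAt φ D t := by
    intro t ht
    obtain ⟨D, hD, hder⟩ := h _ ((segment_eq_image' ℝ η ξ).symm ▸ mem_image_of_mem _ ht)
    refine ⟨D, hD, ?_⟩
    have hshift := HasDerivAt.comp_sub_const t t (by rwa [sub_self] : HasDerivAt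
      (fun s : ℝ => ⟪A ((η + t • (ξ - η)) + s • (ξ - η)), ξ - η⟫) D (t - t))
    refine hshift.congr_of_eventuallyEq (Eventually.of_forall fun s => ?_)
    have hline : η + s • (ξ - η) = (η + t • (ξ - η)) + (s - t) • (ξ - η) := by module
    simp only [φ]
    rw [hline]
  choose! φ' hφ'pos hφ' using hφ
  have hmono : StrictMonoOn φ (Icc 0 1) :=
    strictMonoOn_of_deriv_pos (convex_Icc 0 1)
      (fun t ht => (hφ' t ht).continuousAt.continuousWithinAt) fun t ht => by
        rw [interior_Icc] at ht
        rw [(hφ' t (Ioo_subset_Icc_self ht)).deriv]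
        exact hφ'pos t (Ioo_subset_Icc_self ht)
  have h01 := hmono (left_mem_Icc.2 zero_le_one) (right_mem_Icc.2 zero_le_one) zero_lt_one
  simpa [φ, inner_sub_left] using h01

end InnerProduct

theorem stmt16_general {n : ℕ} (H : EuclideanSpace ℝ (Fin n) → ℝ)
    (hzero : ∀ x, H x = 0 ↔ x = 0)
    (htri : ∀ x y, H (x + y) ≤ H x + H y)
    (hhom : ∀ (c : ℝ) (x : EuclideanSpace ℝ (Fin n)), H (c • x) = |c| * H x)
    (hC2 : ContDiffOn ℝ 2 H {(0 : EuclideanSpace ℝ (Fin n))}ᶜ)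
    (lam Lam : ℝ) (hlam : 0 < lam)
    (hell : ∀ ξ : EuclideanSpace ℝ (Fin n), ξ ≠ 0 → ∀ η : EuclideanSpace ℝ (Fin n),
      lam * ‖η‖ ^ 2 ≤ (1 / 2) * iteratedFDeriv ℝ 2 (fun x => (H x) ^ 2) ξ ![η, η] ∧
      (1 / 2) * iteratedFDeriv ℝ 2 (fun x => (H x) ^ 2) ξ ![η, η] ≤ Lam * ‖η‖ ^ 2)
    (a : ℝ → ℝ) (ia : ℝ)
    (ha : ∀ t > (0 : ℝ), 0 < a t)
    (hadiff : ∀ t > (0 : ℝ), DifferentiableAt ℝ a t)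
    (hia : -1 < ia)
    (hlow : ∀ t > (0 : ℝ), ia ≤ t * deriv a t / a t)
    (𝒜 : EuclideanSpace ℝ (Fin n) → EuclideanSpace ℝ (Fin n))
    (h𝒜0 : 𝒜 0 = 0)
    (h𝒜 : ∀ ξ : EuclideanSpace ℝ (Fin n), ξ ≠ 0 →
      𝒜 ξ = a (H ξ) • ((1 / 2 : ℝ) • gradient (fun x => (H x) ^ 2) ξ)) :
    ∀ ξ η : EuclideanSpace ℝ (Fin n), ξ ≠ η → 0 < ⟪𝒜 ξ - 𝒜 η, ξ - η⟫ := by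
  intro ξ η hne
  let p : Seminorm ℝ (EuclideanSpace ℝ (Fin n)) := Seminorm.of H htri (by simpa using hhom)
  have hHpos : ∀ x ≠ 0, 0 < H x := fun x hx => (apply_nonneg p x).lt_of_ne' (mt (hzero x).1 hx)
  have hHC2 : ∀ x ≠ 0, ContDiffAt ℝ 2 H x := fun x hx =>
    hC2.contDiffAt (isOpen_compl_singleton.mem_nhds hx)
  have hinner : ∀ x ≠ 0, ∀ v, ⟪𝒜 x, v⟫ = a (H x) * (H x * fderiv ℝ H x v) := fun x hx v => by
    rw [h𝒜 x hx, inner_smul_half_gradient_sq ((hHC2 x hx).differentiableAt two_ne_zero)]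
  by_cases h0 : (0 : EuclideanSpace ℝ (Fin n)) ∈ segment ℝ η ξ
  · refine inner_sub_pos_of_zero_mem_segment h𝒜0 (fun x hx => ?_) hne h0
    have heuler : fderiv ℝ H x x = H x := by
      simpa using ((hHC2 x hx).differentiableAt two_ne_zero).hasFDerivAt.apply_self_of_homogeneous
        (k := 1) fun t ht => by rw [hhom, abs_of_pos ht, pow_one]
    rw [hinner x hx, heuler]
    exact mul_pos (ha _ (hHpos x hx)) (mul_pos (hHpos x hx) (hHpos x hx))
  · refine inner_sub_pos_of_hasLineDerivAt_pos fun x hx => ?_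
    have hx0 : x ≠ 0 := by rintro rfl; exact h0 hx
    have hHx := hHpos x hx0
    have hQ : 0 < iteratedFDeriv ℝ 2 (fun y => H y ^ 2) x ![ξ - η, ξ - η] := by
      have hv : 0 < ‖ξ - η‖ := norm_pos_iff.2 (sub_ne_zero.2 hne)
      nlinarith [(hell x hx0 (ξ - η)).1, mul_pos hlam (pow_pos hv 2)]
    refine ⟨_, p.convexOn.deriv_mul_sq_add_pos (hHC2 x hx0) hHx _ hQ (ha _ hHx) hia (hlow _ hHx),
      ?_⟩
    refine (hasLineDerivAt_mul_mul_fderiv (hHC2 x hx0) (hadiff _ hHx) _).congr_of_eventuallyEq ?_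
    filter_upwards [isOpen_compl_singleton.mem_nhds hx0] with y hy using hinner y hy _

/-- Strict monotonicity of `𝒜(ξ) = a(H(ξ))·½∇(H²)(ξ)` (extended by `𝒜(0)=0`):
`(𝒜(ξ) − 𝒜(η))·(ξ − η) > 0` whenever `ξ ≠ η`. -/
theorem stmt16 {n : ℕ} (H : EuclideanSpace ℝ (Fin n) → ℝ)
    (hpos : ∀ x, 0 ≤ H x)
    (hzero : ∀ x, H x = 0 ↔ x = 0)
    (htri : ∀ x y, H (x + y) ≤ H x + H y)
    (hhom : ∀ (c : ℝ) (x : EuclideanSpace ℝ (Fin n)), H (c • x) = |c| * H x)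
    (hC2 : ContDiffOn ℝ 2 H {(0 : EuclideanSpace ℝ (Fin n))}ᶜ)
    (lam Lam : ℝ) (hlam : 0 < lam) (hlL : lam ≤ Lam)
    (hell : ∀ ξ : EuclideanSpace ℝ (Fin n), ξ ≠ 0 → ∀ η : EuclideanSpace ℝ (Fin n),
      lam * ‖η‖ ^ 2 ≤ (1 / 2) * iteratedFDeriv ℝ 2 (fun x => (H x) ^ 2) ξ ![η, η] ∧
      (1 / 2) * iteratedFDeriv ℝ 2 (fun x => (H x) ^ 2) ξ ![η, η] ≤ Lam * ‖η‖ ^ 2)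
    (a : ℝ → ℝ) (ia sa : ℝ)
    (ha : ∀ t > (0 : ℝ), 0 < a t)
    (hadiff : ∀ t > (0 : ℝ), DifferentiableAt ℝ a t)
    (hia : -1 < ia) (hiasa : ia ≤ sa)
    (hlow : ∀ t > (0 : ℝ), ia ≤ t * deriv a t / a t)
    (hhigh : ∀ t > (0 : ℝ), t * deriv a t / a t ≤ sa)
    (𝒜 : EuclideanSpace ℝ (Fin n) → EuclideanSpace ℝ (Fin n))
    (h𝒜0 : 𝒜 0 = 0)
    (h𝒜 : ∀ ξ : EuclideanSpace ℝ (Fin n), ξ ≠ 0 →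
      𝒜 ξ = a (H ξ) • ((1 / 2 : ℝ) • gradient (fun x => (H x) ^ 2) ξ)) :
    ∀ ξ η : EuclideanSpace ℝ (Fin n), ξ ≠ η → 0 < ⟪𝒜 ξ - 𝒜 η, ξ - η⟫ :=
  stmt16_general H hzero htri hhom hC2 lam Lam hlam hell a ia ha hadiff hia hlow 𝒜 h𝒜0 h𝒜
end
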